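/- arXiv:math/9806001 — 2 statements merged into one kernel-verified Lean document; each statement's English description precedes it below -/
import Mathlib

section
/- Let $n \geq 4$, let $g$ be a nondegenerate quadratic form and $h$ a nonzero quadratic form on $\mathbb{R}^{n-1}$ with $\mathrm{tr}_g(h) = 0$. Then there is no quadratic form $\theta$ on $\mathbb{R}^{n-1}$ such that $h^2 = g \cdot \theta$ as homogeneous polynomials of degree 4. Equivalently, the function $I = h^2/g$ is not a quadratic form. -/
open Matrix BigOperators

/-- The homogeneous degree-2 polynomial `g_{ij} x^i x^j` attached to a matrix `g`. -/
noncomputable def quadPoly {m : ℕ} (g : Matrix (Fin m) (Fin m) ℝ) : MvPolynomial (Fin m) ℝ :=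
  ∑ i, ∑ j, MvPolynomial.C (g i j) * MvPolynomial.X i * MvPolynomial.X j

/-- Entrywise complexification of a real matrix. -/
def cmap {m : ℕ} (A : Matrix (Fin m) (Fin m) ℝ) : Matrix (Fin m) (Fin m) ℂ :=
  A.map ((↑) : ℝ → ℂ)

lemma cmap_apply {m : ℕ} (A : Matrix (Fin m) (Fin m) ℝ) (i j : Fin m) :
    cmap A i j = (A i j : ℂ) := rfl

lemma cmap_mul {m : ℕ} (A B : Matrix (Fin m) (Fin m) ℝ) :
    cmap (A * B) = cmap A * cmap B := by
  ext i j
  simp only [cmap_apply, Matrix.mul_apply]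
  push_cast
  rfl

lemma cmap_transpose {m : ℕ} (A : Matrix (Fin m) (Fin m) ℝ) :
    cmap Aᵀ = (cmap A)ᵀ := Matrix.transpose_map

lemma cmap_diagonal {m : ℕ} (v : Fin m → ℝ) :
    cmap (diagonal v) = diagonal (fun i => (v i : ℂ)) :=
  Matrix.diagonal_map Complex.ofReal_zero

lemma cmap_one {m : ℕ} : cmap (1 : Matrix (Fin m) (Fin m) ℝ) = 1 :=
  Matrix.map_one _ Complex.ofReal_zero Complex.ofReal_one

lemma aeval_quadPoly' {m : ℕ} (A : Matrix (Fin m) (Fin m) ℝ) (x : Fin m → ℂ) :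
    MvPolynomial.aeval x (quadPoly A) = x ⬝ᵥ (cmap A) *ᵥ x := by
  simp only [quadPoly, map_sum, _root_.map_mul, MvPolynomial.aeval_C, MvPolynomial.aeval_X,
    dotProduct, Matrix.mulVec, cmap_apply, Finset.mul_sum]
  exact Finset.sum_congr rfl fun i _ => Finset.sum_congr rfl fun j _ => by
    rw [show (algebraMap ℝ ℂ) (A i j) = (A i j : ℂ) from rfl]; ring

lemma qc_congr' {m : ℕ} (S A : Matrix (Fin m) (Fin m) ℂ) (y : Fin m → ℂ) :
    (S *ᵥ y) ⬝ᵥ A *ᵥ (S *ᵥ y) = y ⬝ᵥ (Sᵀ * A * S) *ᵥ y := by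
  have h1 : (Sᵀ * A * S) *ᵥ y = Sᵀ *ᵥ (A *ᵥ (S *ᵥ y)) := by
    rw [← mulVec_mulVec, ← mulVec_mulVec]
  rw [h1]
  conv_rhs => rw [dotProduct_mulVec, vecMul_transpose]

lemma qc_cone' {m : ℕ} (A : Matrix (Fin m) (Fin m) ℂ) (j k : Fin m) (c : ℂ) :
    ((Pi.single j 1 : Fin m → ℂ) + c • (Pi.single k 1 : Fin m → ℂ)) ⬝ᵥ
        A *ᵥ ((Pi.single j 1 : Fin m → ℂ) + c • (Pi.single k 1 : Fin m → ℂ))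
      = A j j + c * (A j k + A k j) + c^2 * A k k := by
  simp only [mulVec_add, mulVec_smul, mulVec_single_one, col_apply, add_dotProduct, smul_dotProduct,
    single_dotProduct, dotProduct_add, dotProduct_smul, Pi.add_apply, Pi.smul_apply,
    smul_eq_mul, mul_one]
  ring

/-- the paper's Lemma: for `n ≥ 4`, if `g` is nondegenerate and `h ≠ 0` is
trace-free with respect to `g`, then `h² = g·θ` is impossible for a quadratic form `θ`;
i.e. `I = h²/g` is not a quadratic form. -/
theorem conformal_quadratic_element_not_quadratic {n : ℕ} (hn : 4 ≤ n)
    (g h : Matrix (Fin (n - 1)) (Fin (n - 1)) ℝ)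
    (hgsym : g.IsSymm) (hgnd : IsUnit g.det)
    (hhsym : h.IsSymm) (hh0 : h ≠ 0) (htr : (g⁻¹ * h).trace = 0) :
    ¬ ∃ θ : Matrix (Fin (n - 1)) (Fin (n - 1)) ℝ, θ.IsSymm ∧
      (quadPoly h) ^ 2 = quadPoly g * quadPoly θ := by
  rintro ⟨θ, hθsym, hEq⟩
  have hm3 : 3 ≤ n - 1 := by omega
  -- pointwise complex identity
  have key : ∀ x : Fin (n-1) → ℂ,
      (x ⬝ᵥ (cmap h) *ᵥ x) ^ 2 = (x ⬝ᵥ (cmap g) *ᵥ x) * (x ⬝ᵥ (cmap θ) *ᵥ x) := by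
    intro x
    have := congrArg (MvPolynomial.aeval x) hEq
    simpa only [map_pow, _root_.map_mul, aeval_quadPoly'] using this
  -- spectral theorem for g
  have hgH : g.IsHermitian := by
    rw [Matrix.IsHermitian, conjTranspose_eq_transpose_of_trivial]; exact hgsym
  set U : Matrix (Fin (n-1)) (Fin (n-1)) ℝ :=
    (hgH.eigenvectorUnitary : Matrix (Fin (n-1)) (Fin (n-1)) ℝ) with hU
  set d : Fin (n-1) → ℝ := hgH.eigenvalues with hd
  have hspec : g = U * diagonal d * Uᵀ := by
    have := hgH.spectral_theorem
    rwa [Unitary.conjStarAlgAut_apply, Matrix.star_eq_conjTranspose, conjTranspose_eq_transpose_of_trivial,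
      RCLike.ofReal_real_eq_id, Function.id_comp] at this
  have hdne : ∀ i, d i ≠ 0 := by
    have hdet := hgH.det_eq_prod_eigenvalues
    rw [RCLike.ofReal_real_eq_id] at hdet
    intro i hi
    apply hgnd.ne_zero
    rw [hdet]
    exact Finset.prod_eq_zero (Finset.mem_univ i) (by simpa using hi)
  have hUU : Uᵀ * U = 1 := by
    have := Unitary.coe_star_mul_self hgH.eigenvectorUnitary
    rwa [Matrix.star_eq_conjTranspose, conjTranspose_eq_transpose_of_trivial] at this
  -- complex square roots of inverse eigenvalues
  set s : Fin (n-1) → ℂ := fun i => (d i : ℂ) ^ ((-1 : ℂ)/2) with hs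
  have hdC : ∀ i, (d i : ℂ) ≠ 0 := fun i => Complex.ofReal_ne_zero.mpr (hdne i)
  have hs2 : ∀ i, s i ^ 2 = ((d i : ℂ))⁻¹ := by
    intro i
    rw [hs, sq, ← Complex.cpow_add _ _ (hdC i)]
    norm_num [Complex.cpow_neg_one]
  set S : Matrix (Fin (n-1)) (Fin (n-1)) ℂ := (cmap U) * diagonal s with hSdef
  have hUU' : (cmap U)ᵀ * cmap U = 1 := by
    rw [← cmap_transpose, ← cmap_mul, hUU, cmap_one]
  have hcan : ∀ X : Matrix (Fin (n-1)) (Fin (n-1)) ℂ, (cmap U)ᵀ * (cmap U * X) = X := fun X => by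
    rw [← Matrix.mul_assoc, hUU', Matrix.one_mul]
  have hgmap : cmap g = cmap U * (diagonal (fun i => (d i : ℂ)) * (cmap U)ᵀ) := by
    rw [hspec, cmap_mul, cmap_mul, cmap_diagonal, cmap_transpose, Matrix.mul_assoc]
  have hS1 : Sᵀ * cmap g * S = 1 := by
    rw [hSdef, Matrix.transpose_mul, Matrix.diagonal_transpose, hgmap]
    simp only [Matrix.mul_assoc]
    rw [hcan, hcan, Matrix.diagonal_mul_diagonal, Matrix.diagonal_mul_diagonal]
    have hfun : (fun i => s i * ((d i : ℂ) * s i)) = fun _ => (1:ℂ) := by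
      funext i
      have he : s i * ((d i : ℂ) * s i) = s i ^ 2 * (d i : ℂ) := by ring
      rw [he, hs2 i, inv_mul_cancel₀ (hdC i)]
    rw [hfun]
    exact Matrix.diagonal_one
  -- transformed matrices
  clear hSdef
  clear_value S
  set h₂ : Matrix (Fin (n-1)) (Fin (n-1)) ℂ := Sᵀ * cmap h * S with hh₂
  set θ₂ : Matrix (Fin (n-1)) (Fin (n-1)) ℂ := Sᵀ * cmap θ * S with hθ₂
  have keyY : ∀ y : Fin (n-1) → ℂ,
      (y ⬝ᵥ h₂ *ᵥ y) ^ 2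
        = (y ⬝ᵥ (1 : Matrix (Fin (n-1)) (Fin (n-1)) ℂ) *ᵥ y) * (y ⬝ᵥ θ₂ *ᵥ y) := by
    intro y
    have := key (S *ᵥ y)
    rwa [qc_congr', qc_congr', qc_congr', hS1] at this
  -- symmetry of h₂
  have hh₂symm : ∀ a b, h₂ a b = h₂ b a := by
    intro a b
    have hmap : (cmap h)ᵀ = cmap h := by rw [← cmap_transpose, hhsym]
    have hT : h₂ᵀ = h₂ := by
      rw [hh₂, Matrix.transpose_mul, Matrix.transpose_mul, Matrix.transpose_transpose, hmap,
        ← Matrix.mul_assoc]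
    conv_lhs => rw [← hT]
    rfl
  -- cone point equations
  have cone : ∀ (j k : Fin (n-1)), j ≠ k → ∀ c : ℂ, c ^ 2 = -1 →
      h₂ j j + c * (h₂ j k + h₂ k j) + c^2 * h₂ k k = 0 := by
    intro j k hjk c hc
    have h1 : ((Pi.single j 1 : Fin (n-1) → ℂ) + c • (Pi.single k 1 : Fin (n-1) → ℂ)) ⬝ᵥ
        (1 : Matrix (Fin (n-1)) (Fin (n-1)) ℂ) *ᵥ
        ((Pi.single j 1 : Fin (n-1) → ℂ) + c • (Pi.single k 1 : Fin (n-1) → ℂ)) = 0 := by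
      rw [qc_cone', Matrix.one_apply_eq, Matrix.one_apply_ne hjk,
        Matrix.one_apply_ne (Ne.symm hjk), Matrix.one_apply_eq, hc]
      ring
    have h2 := keyY ((Pi.single j 1 : Fin (n-1) → ℂ) + c • (Pi.single k 1 : Fin (n-1) → ℂ))
    rw [h1, zero_mul, pow_eq_zero_iff (two_ne_zero)] at h2
    rw [qc_cone'] at h2
    exact h2
  have hmI : ((-Complex.I)^2 : ℂ) = -1 := by rw [neg_pow, Complex.I_sq]; ring
  have hoff : ∀ (j k : Fin (n-1)), j ≠ k → h₂ j k = 0 := by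
    intro j k hjk
    have e1 := cone j k hjk Complex.I Complex.I_sq
    have e2 := cone j k hjk (-Complex.I) hmI
    rw [Complex.I_sq] at e1
    rw [hmI] at e2
    have hsymm := hh₂symm k j
    have h4 : (4 * Complex.I) * h₂ j k = 0 := by
      linear_combination e1 - e2 - 2 * Complex.I * hsymm
    rcases mul_eq_zero.mp h4 with h | h
    · exact absurd h (by simp [Complex.I_ne_zero])
    · exact h
  have hdiag : ∀ (j k : Fin (n-1)), j ≠ k → h₂ j j = h₂ k k := by
    intro j k hjk
    have e1 := cone j k hjk Complex.I Complex.I_sq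
    have e2 := cone j k hjk (-Complex.I) hmI
    rw [Complex.I_sq] at e1
    rw [hmI] at e2
    linear_combination (e1 + e2) / 2
  -- h₂ is a scalar matrix
  have hmpos : 0 < n - 1 := by omega
  set j0 : Fin (n-1) := ⟨0, hmpos⟩ with hj0
  set c : ℂ := h₂ j0 j0 with hc
  have hscal : h₂ = c • (1 : Matrix (Fin (n-1)) (Fin (n-1)) ℂ) := by
    ext a b
    by_cases hab : a = b
    · subst hab
      by_cases ha : a = j0
      · subst ha; simp [hc]
      · rw [hdiag a j0 ha]; simp [hc]
    · rw [hoff a b hab]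
      simp [Matrix.one_apply_ne hab]
  -- invertibility of S
  have hdetc := congrArg Matrix.det hS1
  rw [Matrix.det_mul, Matrix.det_mul, Matrix.det_one] at hdetc
  have hdetS : IsUnit S.det :=
    IsUnit.of_mul_eq_one (Sᵀ.det * (cmap g).det) (by linear_combination hdetc)
  have hdetST : IsUnit Sᵀ.det :=
    IsUnit.of_mul_eq_one ((cmap g).det * S.det) (by linear_combination hdetc)
  -- cmap h = c • cmap g
  have hMzero : cmap h - c • cmap g = 0 := by
    have hM : Sᵀ * (cmap h - c • cmap g) * S = 0 := by
      rw [Matrix.mul_sub, Matrix.sub_mul, Matrix.mul_smul, Matrix.smul_mul, hS1, ← hh₂, hscal]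
      simp
    have h2 := congrArg (fun X => (Sᵀ)⁻¹ * X * S⁻¹) hM
    simp only [Matrix.mul_assoc, Matrix.zero_mul, Matrix.mul_zero] at h2
    rw [Matrix.mul_nonsing_inv S hdetS, Matrix.mul_one, ← Matrix.mul_assoc,
      Matrix.nonsing_inv_mul _ hdetST, Matrix.one_mul] at h2
    exact h2
  have hent : ∀ a b, (h a b : ℂ) = c * (g a b : ℂ) := by
    intro a b
    have hz := congrFun (congrFun hMzero a) b
    simp only [Matrix.sub_apply, Matrix.smul_apply, smul_eq_mul, Matrix.zero_apply,
      cmap_apply] at hz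
    exact sub_eq_zero.mp hz
  -- conclude h = r • g with r real
  obtain ⟨a, b, hab⟩ : ∃ a b, h a b ≠ 0 := by
    by_contra hcon
    push_neg at hcon
    exact hh0 (Matrix.ext fun a b => hcon a b)
  have hgab : (g a b : ℝ) ≠ 0 := by
    intro h0
    apply hab
    have := hent a b
    rw [h0] at this
    simpa using this
  set r : ℝ := h a b / g a b with hr
  have hcr : c = (r : ℂ) := by
    rw [hr, Complex.ofReal_div, eq_div_iff (Complex.ofReal_ne_zero.mpr hgab)]
    exact (hent a b).symm
  have hhr : h = r • g := by
    ext a' b'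
    have hz := hent a' b'
    rw [hcr] at hz
    have : ((h a' b' : ℝ) : ℂ) = ((r * g a' b' : ℝ) : ℂ) := by push_cast; exact hz
    simpa using Complex.ofReal_injective this
  -- trace condition kills r
  rw [hhr, Matrix.mul_smul, Matrix.trace_smul, Matrix.nonsing_inv_mul g hgnd,
    Matrix.trace_one] at htr
  have hmne : ((Fintype.card (Fin (n-1)) : ℝ)) ≠ 0 := by
    simp only [Fintype.card_fin]
    exact_mod_cast (by omega : n - 1 ≠ 0)
  have hr0 : r = 0 := by
    rcases mul_eq_zero.mp htr with h' | h'
    · exact h'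
    · exact absurd h' hmne
  apply hh0
  rw [hhr, hr0, zero_smul]
end

section
/- Let $n \geq 4$ and let $g, \bar g$ be nondegenerate quadratic forms and $h, \bar h$ nonzero quadratic forms on $\mathbb{R}^{n-1}$ with $\mathrm{tr}_g(h) = 0$ and $\mathrm{tr}_{\bar g}(\bar h) = 0$. If $g \cdot \bar h^2 = \bar g \cdot h^2$ as homogeneous polynomials of degree 4, then there exists a nonzero real number $\sigma$ such that $\bar g = \sigma^2 g$ and $\bar h = \pm\sigma h$ (i.e., $\bar g$ is a positive scalar multiple of $g$ and $\bar h$ is the corresponding multiple of $h$ up to sign). -/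
open Matrix BigOperators MvPolynomial
set_option linter.unusedSectionVars false

lemma quadPoly_eval {m : ℕ} (g : Matrix (Fin m) (Fin m) ℝ) (x : Fin m → ℝ) :
    MvPolynomial.eval x (quadPoly g) = x ⬝ᵥ (g *ᵥ x) := by
  simp only [quadPoly, map_sum, _root_.map_mul, eval_C, eval_X, dotProduct, mulVec,
    Finset.mul_sum]
  exact Finset.sum_congr rfl fun i _ => Finset.sum_congr rfl fun j _ => by ring

lemma quadPoly_isHomogeneous {m : ℕ} (g : Matrix (Fin m) (Fin m) ℝ) :
    (quadPoly g).IsHomogeneous 2 := by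
  apply MvPolynomial.IsHomogeneous.sum
  intro i _
  apply MvPolynomial.IsHomogeneous.sum
  intro j _
  exact ((MvPolynomial.isHomogeneous_C _ _).mul (MvPolynomial.isHomogeneous_X _ _)).mul
    (MvPolynomial.isHomogeneous_X _ _)

lemma quadPoly_smul {m : ℕ} (c : ℝ) (g : Matrix (Fin m) (Fin m) ℝ) :
    quadPoly (c • g) = MvPolynomial.C c * quadPoly g := by
  simp only [quadPoly, Finset.mul_sum, Matrix.smul_apply, smul_eq_mul, _root_.map_mul]
  exact Finset.sum_congr rfl fun i _ => Finset.sum_congr rfl fun j _ => by ring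

lemma Matrix.IsSymm.apply' {m : ℕ} {g : Matrix (Fin m) (Fin m) ℝ} (hg : g.IsSymm) (i j : Fin m) :
    g j i = g i j := by
  conv_lhs => rw [← hg, Matrix.transpose_apply]

lemma quadPoly_inj {m : ℕ} {g g' : Matrix (Fin m) (Fin m) ℝ} (hg : g.IsSymm) (hg' : g'.IsSymm)
    (h : quadPoly g = quadPoly g') : g = g' := by
  have hev : ∀ x : Fin m → ℝ, x ⬝ᵥ (g *ᵥ x) = x ⬝ᵥ (g' *ᵥ x) := by
    intro x; rw [← quadPoly_eval, ← quadPoly_eval, h]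
  have hdiag : ∀ i, g i i = g' i i := by
    intro i
    have := hev (Pi.single i 1)
    simpa [Matrix.mulVec_single, single_dotProduct] using this
  ext i j
  have := hev (Pi.single i 1 + Pi.single j 1)
  simp only [Matrix.mulVec_add, Matrix.mulVec_single_one, dotProduct_add, add_dotProduct,
    single_dotProduct, Matrix.col_apply, mul_one, one_mul] at this
  nlinarith [this, hdiag i, hdiag j, hg.apply' i j, hg'.apply' i j]
lemma degree_eq_sum' (d : σ →₀ ℕ) : d.degree = d.sum fun _ e => e := by
  rw [Finsupp.degree, Finsupp.sum]
  rfl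

lemma hc_top_ne_zero {p : MvPolynomial σ ℝ} (hp : p ≠ 0) :
    homogeneousComponent p.totalDegree p ≠ 0 := by
  obtain ⟨d, hd, hdeg⟩ := Finset.exists_mem_eq_sup p.support
    (MvPolynomial.support_nonempty.mpr hp) fun s => s.sum fun _ e => e
  intro h0
  have : coeff d (homogeneousComponent p.totalDegree p) = coeff d p := by
    rw [coeff_homogeneousComponent, if_pos]
    rw [degree_eq_sum', MvPolynomial.totalDegree, hdeg]
  rw [h0, coeff_zero] at this
  exact MvPolynomial.mem_support_iff.mp hd this.symm

lemma lowdeg_lt {p : MvPolynomial σ ℝ} (hne : p - homogeneousComponent p.totalDegree p ≠ 0) :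
    (p - homogeneousComponent p.totalDegree p).totalDegree < p.totalDegree := by
  set q := p - homogeneousComponent p.totalDegree p with hq
  have hsupp : ∀ d ∈ q.support, (d.sum fun _ e => e) < p.totalDegree := by
    intro d hd
    have hcd : coeff d q ≠ 0 := MvPolynomial.mem_support_iff.mp hd
    have hco : coeff d q = coeff d p - if d.degree = p.totalDegree then coeff d p else 0 := by
      rw [hq, MvPolynomial.coeff_sub, coeff_homogeneousComponent]
    by_cases hdd : d.degree = p.totalDegree
    · rw [if_pos hdd, sub_self] at hco; exact absurd hco hcd
    · rw [if_neg hdd, sub_zero] at hco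
      have hle : (d.sum fun _ e => e) ≤ p.totalDegree := by
        rw [hco] at hcd
        exact MvPolynomial.le_totalDegree (MvPolynomial.mem_support_iff.mpr hcd)
      rcases lt_or_eq_of_le hle with h | h
      · exact h
      · exact absurd (by rw [degree_eq_sum']; exact h) hdd
  have hpos : 0 < p.totalDegree := by
    obtain ⟨d, hd⟩ := MvPolynomial.support_nonempty.mpr hne
    exact lt_of_le_of_lt (Nat.zero_le _) (hsupp d hd)
  rw [MvPolynomial.totalDegree]
  exact (Finset.sup_lt_iff hpos).mpr hsupp

lemma hc_top_mul (A B : MvPolynomial σ ℝ) :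
    homogeneousComponent (A.totalDegree + B.totalDegree) (A * B) =
      homogeneousComponent A.totalDegree A * homogeneousComponent B.totalDegree B := by
  have hA1h : (homogeneousComponent A.totalDegree A).IsHomogeneous A.totalDegree :=
    homogeneousComponent_isHomogeneous _ A
  have hB1h : (homogeneousComponent B.totalDegree B).IsHomogeneous B.totalDegree :=
    homogeneousComponent_isHomogeneous _ B
  have hsplit : A * B = (A - homogeneousComponent A.totalDegree A) * B
      + homogeneousComponent A.totalDegree A * (B - homogeneousComponent B.totalDegree B)
      + homogeneousComponent A.totalDegree A * homogeneousComponent B.totalDegree B := by ring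
  have hz1 : homogeneousComponent (A.totalDegree + B.totalDegree)
      ((A - homogeneousComponent A.totalDegree A) * B) = 0 := by
    rcases eq_or_ne (A - homogeneousComponent A.totalDegree A) 0 with h | h
    · rw [h, zero_mul, map_zero]
    · apply homogeneousComponent_eq_zero
      calc ((A - homogeneousComponent A.totalDegree A) * B).totalDegree
          ≤ (A - homogeneousComponent A.totalDegree A).totalDegree + B.totalDegree :=
            MvPolynomial.totalDegree_mul _ _
        _ < A.totalDegree + B.totalDegree := by have := lowdeg_lt h; omega
  have hz2 : homogeneousComponent (A.totalDegree + B.totalDegree)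
      (homogeneousComponent A.totalDegree A * (B - homogeneousComponent B.totalDegree B)) = 0 := by
    rcases eq_or_ne (homogeneousComponent A.totalDegree A) 0 with h | h
    · rw [h, zero_mul, map_zero]
    rcases eq_or_ne (B - homogeneousComponent B.totalDegree B) 0 with h' | h'
    · rw [h', mul_zero, map_zero]
    apply homogeneousComponent_eq_zero
    calc (homogeneousComponent A.totalDegree A
            * (B - homogeneousComponent B.totalDegree B)).totalDegree
        ≤ (homogeneousComponent A.totalDegree A).totalDegree
            + (B - homogeneousComponent B.totalDegree B).totalDegree :=
          MvPolynomial.totalDegree_mul _ _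
      _ < A.totalDegree + B.totalDegree := by
          have h1 : (homogeneousComponent A.totalDegree A).totalDegree = A.totalDegree :=
            hA1h.totalDegree h
          have h2 := lowdeg_lt h'
          omega
  have hz3 : homogeneousComponent (A.totalDegree + B.totalDegree)
      (homogeneousComponent A.totalDegree A * homogeneousComponent B.totalDegree B) =
      homogeneousComponent A.totalDegree A * homogeneousComponent B.totalDegree B := by
    rw [homogeneousComponent_of_mem ((mem_homogeneousSubmodule _ _).mpr (hA1h.mul hB1h)),
      if_pos rfl]
  rw [hsplit, map_add, map_add, hz1, hz2, hz3, zero_add, zero_add]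

lemma totalDegree_mul_eq {A B : MvPolynomial σ ℝ} (hA : A ≠ 0) (hB : B ≠ 0) :
    (A * B).totalDegree = A.totalDegree + B.totalDegree := by
  refine le_antisymm (MvPolynomial.totalDegree_mul A B) ?_
  by_contra hlt
  push_neg at hlt
  have h0 : homogeneousComponent (A.totalDegree + B.totalDegree) (A * B) = 0 :=
    homogeneousComponent_eq_zero _ _ hlt
  rw [hc_top_mul] at h0
  exact mul_ne_zero (hc_top_ne_zero hA) (hc_top_ne_zero hB) h0

variable {σ : Type*} [DecidableEq σ]

lemma eq_C_of_totalDegree_zero {p : MvPolynomial σ ℝ} (h : p.totalDegree = 0) :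
    p = C (coeff 0 p) := by
  have hh : p.IsHomogeneous 0 := (totalDegree_zero_iff_isHomogeneous σ).mp h
  have := homogeneousComponent_of_mem (m := 0) ((mem_homogeneousSubmodule _ _).mpr hh)
  rw [if_pos rfl] at this
  conv_lhs => rw [← this]
  rw [homogeneousComponent_zero]

lemma degree_one_single {d : σ →₀ ℕ} (h : d.degree = 1) : ∃ i, d = Finsupp.single i 1 := by
  have hsupp : d.support.Nonempty := by
    rcases Finset.eq_empty_or_nonempty d.support with he | hne
    · exfalso; rw [Finsupp.degree_apply, he, Finset.sum_empty] at h; exact one_ne_zero h.symm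
    · exact hne
  obtain ⟨i, hi⟩ := hsupp
  have hdi : 1 ≤ d i := Nat.one_le_iff_ne_zero.mpr (Finsupp.mem_support_iff.mp hi)
  have hsum : d i + ∑ j ∈ d.support.erase i, d j = 1 := by
    rw [Finset.add_sum_erase _ _ hi, ← Finsupp.degree_apply, h]
  have hdi1 : d i = 1 := by omega
  have hrest : ∀ j ∈ d.support.erase i, d j = 0 := by
    intro j hj
    have : ∑ j ∈ d.support.erase i, d j = 0 := by omega
    exact Finset.sum_eq_zero_iff.mp this j hj
  refine ⟨i, ?_⟩
  ext j
  rcases eq_or_ne j i with rfl | hne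
  · simp [hdi1]
  · rw [Finsupp.single_apply, if_neg (Ne.symm hne)]
    by_cases hjs : j ∈ d.support
    · exact hrest j (Finset.mem_erase.mpr ⟨hne, hjs⟩)
    · exact Finsupp.notMem_support_iff.mp hjs

variable [Fintype σ]

lemma homog_one_rep {p : MvPolynomial σ ℝ} (hp : p.IsHomogeneous 1) :
    p = ∑ i, C (coeff (Finsupp.single i 1) p) * X i := by
  ext d
  rw [MvPolynomial.coeff_sum]
  simp only [coeff_C_mul, coeff_X']
  by_cases hd : ∃ i, d = Finsupp.single i 1
  · obtain ⟨i, rfl⟩ := hd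
    rw [Finset.sum_congr rfl (fun i' _ => ?_), Finset.sum_ite_eq' Finset.univ i
      (fun i' => coeff (Finsupp.single i' 1) p), if_pos (Finset.mem_univ i)]
    by_cases h : i' = i
    · rw [if_pos h, if_pos (by rw [h]), mul_one]
    · rw [if_neg h, if_neg (fun hc => h (Finsupp.single_left_injective one_ne_zero hc)), mul_zero]
  · have h1 : coeff d p = 0 := by
      apply hp.coeff_eq_zero
      intro hdeg
      exact hd (by obtain ⟨i, hi⟩ := degree_one_single hdeg; exact ⟨i, hi⟩)
    rw [h1, Finset.sum_eq_zero]
    intro i _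
    rw [if_neg (fun hc => hd ⟨i, hc.symm⟩), mul_zero]

lemma factor_homog_one {P p q : MvPolynomial σ ℝ} (hP : P.IsHomogeneous 2)
    (hpq : P = p * q) (hp1 : p.totalDegree = 1) (hq1 : q.totalDegree = 1) :
    p.IsHomogeneous 1 := by
  have hp0 : p ≠ 0 := fun h => by rw [h] at hp1; simp at hp1
  have hq0 : q ≠ 0 := fun h => by rw [h] at hq1; simp at hq1
  have hp1' : p = C (coeff 0 p) + homogeneousComponent 1 p := by
    conv_lhs => rw [← sum_homogeneousComponent p]
    rw [hp1, Finset.sum_range_succ, Finset.sum_range_one, homogeneousComponent_zero]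
  have hq1' : q = C (coeff 0 q) + homogeneousComponent 1 q := by
    conv_lhs => rw [← sum_homogeneousComponent q]
    rw [hq1, Finset.sum_range_succ, Finset.sum_range_one, homogeneousComponent_zero]
  set c := coeff 0 p
  set d := coeff 0 q
  set p1 := homogeneousComponent 1 p with hp1def
  set q1 := homogeneousComponent 1 q with hq1def
  have hp1h : p1.IsHomogeneous 1 := homogeneousComponent_isHomogeneous 1 p
  have hq1h : q1.IsHomogeneous 1 := homogeneousComponent_isHomogeneous 1 q
  have hp1ne : p1 ≠ 0 := by
    have := hc_top_ne_zero hp0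
    rwa [hp1] at this
  have hq1ne : q1 ≠ 0 := by
    have := hc_top_ne_zero hq0
    rwa [hq1] at this
  -- P = p1 * q1
  have hPmem : homogeneousComponent 2 P = P := by
    rw [homogeneousComponent_of_mem ((mem_homogeneousSubmodule _ _).mpr hP), if_pos rfl]
  have hz0 : ∀ r : ℝ, homogeneousComponent 2 (C r) = 0 := fun r => by
    rw [homogeneousComponent_of_mem ((mem_homogeneousSubmodule 0 _).mpr
      (isHomogeneous_C σ r)), if_neg (by norm_num)]
  have hzp1 : homogeneousComponent 2 p1 = 0 := by
    rw [homogeneousComponent_of_mem ((mem_homogeneousSubmodule 1 _).mpr hp1h),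
      if_neg (by norm_num)]
  have hzq1 : homogeneousComponent 2 q1 = 0 := by
    rw [homogeneousComponent_of_mem ((mem_homogeneousSubmodule 1 _).mpr hq1h),
      if_neg (by norm_num)]
  have hexp : P = C c * C d + C c * q1 + C d * p1 + p1 * q1 := by
    rw [hpq]; conv_lhs => rw [hp1', hq1']
    ring
  have hP11 : P = p1 * q1 := by
    conv_lhs => rw [← hPmem, hexp]
    rw [map_add, map_add, map_add, ← _root_.map_mul, hz0 (c * d), homogeneousComponent_C_mul,
      hzq1, homogeneousComponent_C_mul, hzp1,
      homogeneousComponent_of_mem ((mem_homogeneousSubmodule 2 _).mpr (hp1h.mul hq1h)),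
      if_pos rfl]
    simp
  have hE : C c * C d + C c * q1 + C d * p1 = 0 := by
    have : C c * C d + C c * q1 + C d * p1 + p1 * q1 = p1 * q1 := by rw [← hexp, ← hP11]
    linear_combination this
  have hE0 : (c * d : ℝ) = 0 := by
    have := congrArg (homogeneousComponent 0) hE
    rw [map_add, map_add, ← _root_.map_mul, map_zero, homogeneousComponent_C_mul,
      homogeneousComponent_C_mul] at this
    rw [homogeneousComponent_of_mem ((mem_homogeneousSubmodule 1 _).mpr hq1h),
      if_neg (by norm_num), homogeneousComponent_of_mem
      ((mem_homogeneousSubmodule 1 _).mpr hp1h), if_neg (by norm_num)] at this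
    rw [homogeneousComponent_of_mem ((mem_homogeneousSubmodule 0 _).mpr
      (isHomogeneous_C σ (c * d))), if_pos rfl] at this
    have h2 : C (σ := σ) (c * d) = 0 := by rw [← this]; ring
    exact (MvPolynomial.C_eq_zero).mp h2
  have hE1 : C c * q1 + C d * p1 = 0 := by
    have := congrArg (homogeneousComponent 1) hE
    rw [map_add, map_add, ← _root_.map_mul, map_zero, homogeneousComponent_C_mul,
      homogeneousComponent_C_mul] at this
    rw [homogeneousComponent_of_mem ((mem_homogeneousSubmodule 1 _).mpr hq1h), if_pos rfl,
      homogeneousComponent_of_mem ((mem_homogeneousSubmodule 1 _).mpr hp1h), if_pos rfl,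
      homogeneousComponent_of_mem ((mem_homogeneousSubmodule 0 _).mpr
      (isHomogeneous_C σ (c * d))), if_neg (by norm_num)] at this
    rw [← this]; ring
  have hc0 : c = 0 := by
    by_contra hc
    have hd0 : d = 0 := by
      rcases mul_eq_zero.mp hE0 with h | h
      · exact absurd h hc
      · exact h
    rw [hd0, map_zero, zero_mul, add_zero] at hE1
    rcases mul_eq_zero.mp hE1 with h | h
    · exact hc (MvPolynomial.C_eq_zero.mp h)
    · exact hq1ne h
  rw [hc0, map_zero, zero_mul, zero_add] at hE1
  have hd0 : d = 0 := by
    by_contra hd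
    rcases mul_eq_zero.mp hE1 with h | h
    · exact hd (MvPolynomial.C_eq_zero.mp h)
    · exact hp1ne h
  have : p = p1 := by rw [hp1']; rw [hc0]; simp
  rw [this]; exact hp1h
lemma quadPoly_zero {m : ℕ} : quadPoly (0 : Matrix (Fin m) (Fin m) ℝ) = 0 := by
  simp [quadPoly]

lemma quadPoly_ne_zero {m : ℕ} {g : Matrix (Fin m) (Fin m) ℝ} (hgsym : g.IsSymm) (hg : g ≠ 0) :
    quadPoly g ≠ 0 := fun h =>
  hg (quadPoly_inj hgsym (Matrix.isSymm_zero) (h.trans quadPoly_zero.symm))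

lemma matrix_ne_zero_of_det_unit {m : ℕ} (hm : 3 ≤ m) {g : Matrix (Fin m) (Fin m) ℝ}
    (hgnd : IsUnit g.det) : g ≠ 0 := by
  intro h
  rw [h] at hgnd
  have : Nonempty (Fin m) := ⟨⟨0, by omega⟩⟩
  rw [Matrix.det_zero] at hgnd
  exact not_isUnit_zero hgnd

lemma bilin_symm {m : ℕ} {g : Matrix (Fin m) (Fin m) ℝ} (hgsym : g.IsSymm) (x y : Fin m → ℝ) :
    y ⬝ᵥ (g *ᵥ x) = x ⬝ᵥ (g *ᵥ y) := by
  rw [Matrix.dotProduct_mulVec x g y]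
  conv_rhs => rw [← hgsym, Matrix.vecMul_transpose]
  rw [dotProduct_comm]

lemma quadPoly_irreducible {m : ℕ} (hm : 3 ≤ m) {g : Matrix (Fin m) (Fin m) ℝ}
    (hgsym : g.IsSymm) (hgnd : IsUnit g.det) : Irreducible (quadPoly g) := by
  have hg0 : g ≠ 0 := matrix_ne_zero_of_det_unit hm hgnd
  have hP0 : quadPoly g ≠ 0 := quadPoly_ne_zero hgsym hg0
  have hdeg : (quadPoly g).totalDegree = 2 := (quadPoly_isHomogeneous g).totalDegree hP0
  constructor
  · -- not a unit
    intro hu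
    obtain ⟨q, hq⟩ := isUnit_iff_exists_inv.mp hu
    have hq0 : q ≠ 0 := by rintro rfl; rw [mul_zero] at hq; exact one_ne_zero hq.symm
    have := totalDegree_mul_eq hP0 hq0
    rw [hq, MvPolynomial.totalDegree_one, hdeg] at this
    omega
  intro p q hpq
  by_contra hboth
  push_neg at hboth
  obtain ⟨hpu, hqu⟩ := hboth
  have hp0 : p ≠ 0 := by rintro rfl; rw [zero_mul] at hpq; exact hP0 hpq
  have hq0 : q ≠ 0 := by rintro rfl; rw [mul_zero] at hpq; exact hP0 hpq
  have hdegs : p.totalDegree + q.totalDegree = 2 := by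
    rw [← totalDegree_mul_eq hp0 hq0, ← hpq, hdeg]
  have hCunit : ∀ r : MvPolynomial (Fin m) ℝ, r ≠ 0 → r.totalDegree = 0 → IsUnit r := by
    intro r hr0 hrd
    have hrc := eq_C_of_totalDegree_zero hrd
    have hcr : coeff 0 r ≠ 0 := fun h => hr0 (by rw [hrc, h, map_zero])
    rw [hrc]
    refine IsUnit.of_mul_eq_one (MvPolynomial.C (coeff 0 r)⁻¹) ?_
    rw [← _root_.map_mul, mul_inv_cancel₀ hcr, MvPolynomial.C_1]
  have hp1 : p.totalDegree = 1 := by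
    rcases Nat.lt_or_ge p.totalDegree 1 with h | h
    · exact absurd (hCunit p hp0 (by omega)) hpu
    rcases Nat.lt_or_ge q.totalDegree 1 with h' | h'
    · exact absurd (hCunit q hq0 (by omega)) hqu
    omega
  have hq1 : q.totalDegree = 1 := by omega
  have hphom : p.IsHomogeneous 1 :=
    factor_homog_one (quadPoly_isHomogeneous g) hpq hp1 hq1
  -- the coefficient vector of the linear factor p
  set a : Fin m → ℝ := fun i => coeff (Finsupp.single i 1) p with ha
  have hrep : p = ∑ i, C (a i) * X i := homog_one_rep hphom
  have hevalp : ∀ x : Fin m → ℝ, MvPolynomial.eval x p = a ⬝ᵥ x := by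
    intro x
    rw [hrep]
    simp [dotProduct]
  have ha0 : a ≠ 0 := by
    intro h
    apply hp0
    rw [hrep, h]
    simp
  -- the quadratic form vanishes on the hyperplane a ⬝ᵥ x = 0
  have hvan : ∀ x : Fin m → ℝ, a ⬝ᵥ x = 0 → x ⬝ᵥ (g *ᵥ x) = 0 := by
    intro x hx
    rw [← quadPoly_eval, hpq, _root_.map_mul, hevalp, hx, zero_mul]
  have hbil : ∀ x y : Fin m → ℝ, a ⬝ᵥ x = 0 → a ⬝ᵥ y = 0 → x ⬝ᵥ (g *ᵥ y) = 0 := by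
    intro x y hx hy
    have hxy := hvan (x + y) (by rw [dotProduct_add, hx, hy, add_zero])
    rw [Matrix.mulVec_add, dotProduct_add, add_dotProduct,
      add_dotProduct] at hxy
    have h1 := hvan x hx
    have h2 := hvan y hy
    have h3 := bilin_symm hgsym y x
    linarith
  -- image of the hyperplane under g is contained in the span of a
  have hperp : ∀ x : Fin m → ℝ, a ⬝ᵥ x = 0 → g *ᵥ x = ((a ⬝ᵥ (g *ᵥ x)) / (a ⬝ᵥ a)) • a := by
    intro x hx
    have haa : a ⬝ᵥ a ≠ 0 := fun h => ha0 (dotProduct_self_eq_zero.mp h)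
    set w := g *ᵥ x with hw
    set c := (a ⬝ᵥ w) / (a ⬝ᵥ a) with hc
    have hy : a ⬝ᵥ (w - c • a) = 0 := by
      rw [dotProduct_sub, dotProduct_smul, hc, smul_eq_mul]
      field_simp
      ring
    have hyw : (w - c • a) ⬝ᵥ w = 0 := hbil _ x hy hx
    have hya : (w - c • a) ⬝ᵥ a = 0 := by rw [dotProduct_comm]; exact hy
    have hyy : (w - c • a) ⬝ᵥ (w - c • a) = 0 := by
      rw [dotProduct_sub, hyw, dotProduct_smul, smul_eq_mul, hya, mul_zero,
        sub_zero]
    have := dotProduct_self_eq_zero.mp hyy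
    rw [sub_eq_zero] at this
    exact this
  -- injectivity of g
  have hinj : ∀ x : Fin m → ℝ, g *ᵥ x = 0 → x = 0 := by
    intro x hx
    have : g⁻¹ *ᵥ (g *ᵥ x) = x := by
      rw [Matrix.mulVec_mulVec, Matrix.nonsing_inv_mul _ hgnd, Matrix.one_mulVec]
    rw [hx, Matrix.mulVec_zero] at this
    exact this.symm
  -- pick coordinates
  obtain ⟨i0, hi0⟩ : ∃ i, a i ≠ 0 := Function.ne_iff.mp ha0
  obtain ⟨j1, hj1m, j2, hj2m, hj12⟩ :
      ∃ x ∈ Finset.univ.erase i0, ∃ y ∈ Finset.univ.erase i0, x ≠ y := by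
    apply Finset.one_lt_card.mp
    rw [Finset.card_erase_of_mem (Finset.mem_univ i0), Finset.card_univ, Fintype.card_fin]
    omega
  have hj1 : j1 ≠ i0 := (Finset.mem_erase.mp hj1m).1
  have hj2 : j2 ≠ i0 := (Finset.mem_erase.mp hj2m).1
  set v : Fin m → (Fin m → ℝ) := fun j => a i0 • (Pi.single j 1 : Fin m → ℝ) - a j • (Pi.single i0 1 : Fin m → ℝ) with hv
  have hva : ∀ j, a ⬝ᵥ v j = 0 := by
    intro j
    rw [hv]
    simp only [dotProduct_sub, dotProduct_smul, dotProduct_single,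
      smul_eq_mul, mul_one]
    ring
  obtain ⟨c1, hc1⟩ : ∃ c, g *ᵥ v j1 = c • a := ⟨_, hperp (v j1) (hva j1)⟩
  obtain ⟨c2, hc2⟩ : ∃ c, g *ᵥ v j2 = c • a := ⟨_, hperp (v j2) (hva j2)⟩
  have hcomb : c2 • v j1 = c1 • v j2 := by
    have h0 : g *ᵥ (c2 • v j1 - c1 • v j2) = 0 := by
      rw [Matrix.mulVec_sub, Matrix.mulVec_smul, Matrix.mulVec_smul, hc1, hc2,
        smul_smul, smul_smul, mul_comm, sub_self]
    have := hinj _ h0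
    rwa [sub_eq_zero] at this
  have hvj1j1 : v j1 j1 = a i0 := by
    rw [hv]
    simp [Pi.single_apply, hj1, Ne.symm hj1]
  have hvj2j1 : v j2 j1 = 0 := by
    rw [hv]
    simp [Pi.single_apply, Ne.symm hj12, Ne.symm hj1]
  have hvj1j2 : v j1 j2 = 0 := by
    rw [hv]
    simp [Pi.single_apply, hj12, Ne.symm hj2]
  have hvj2j2 : v j2 j2 = a i0 := by
    rw [hv]
    simp [Pi.single_apply, hj2, Ne.symm hj2]
  have hc2_0 : c2 = 0 := by
    have := congrFun hcomb j1
    simp only [Pi.smul_apply, smul_eq_mul, hvj1j1, hvj2j1, mul_zero] at this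
    exact (mul_eq_zero.mp this).resolve_right hi0
  have hc1_0 : c1 = 0 := by
    have := congrFun hcomb j2
    simp only [Pi.smul_apply, smul_eq_mul, hvj1j2, hvj2j2, mul_zero] at this
    exact (mul_eq_zero.mp this.symm).resolve_right hi0
  have hv0 : v j1 = 0 := by
    apply hinj
    rw [hc1, hc1_0, zero_smul]
  have := congrFun hv0 j1
  rw [hvj1j1] at this
  exact hi0 this

lemma scalar_of_dvd {m : ℕ} (hm : 3 ≤ m) {g k : Matrix (Fin m) (Fin m) ℝ}
    (hgsym : g.IsSymm) (hgnd : IsUnit g.det) (hksym : k.IsSymm) (hk0 : k ≠ 0)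
    (hdvd : quadPoly g ∣ quadPoly k) : ∃ r : ℝ, r ≠ 0 ∧ k = r • g := by
  obtain ⟨c, hc⟩ := hdvd
  have hg0 : g ≠ 0 := matrix_ne_zero_of_det_unit hm hgnd
  have hPg0 : quadPoly g ≠ 0 := quadPoly_ne_zero hgsym hg0
  have hPk0 : quadPoly k ≠ 0 := quadPoly_ne_zero hksym hk0
  have hc0 : c ≠ 0 := by rintro rfl; rw [mul_zero] at hc; exact hPk0 hc
  have hdc : c.totalDegree = 0 := by
    have h1 := totalDegree_mul_eq hPg0 hc0
    rw [← hc, (quadPoly_isHomogeneous k).totalDegree hPk0,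
      (quadPoly_isHomogeneous g).totalDegree hPg0] at h1
    omega
  have hcC : c = C (coeff 0 c) := eq_C_of_totalDegree_zero hdc
  set r := coeff 0 c with hr
  have hkr : quadPoly k = quadPoly (r • g) := by
    rw [quadPoly_smul, hc, hcC, mul_comm]
  have hkeq : k = r • g := quadPoly_inj hksym (by rw [Matrix.IsSymm, Matrix.transpose_smul, hgsym]) hkr
  refine ⟨r, ?_, hkeq⟩
  intro hr0
  rw [hr0, zero_smul] at hkeq
  exact hk0 hkeq

/-- equality of conformal quadratic elements `h̄²/ḡ = h²/g` forces
`ḡ = σ² g` and `h̄ = ±σ h` for some nonzero real `σ`. -/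
theorem equal_conformal_elements_proportional_forms {n : ℕ} (hn : 4 ≤ n)
    (g gbar h hbar : Matrix (Fin (n - 1)) (Fin (n - 1)) ℝ)
    (hgsym : g.IsSymm) (hgnd : IsUnit g.det)
    (hgbarsym : gbar.IsSymm) (hgbarnd : IsUnit gbar.det)
    (hhsym : h.IsSymm) (hh0 : h ≠ 0) (htr : (g⁻¹ * h).trace = 0)
    (hhbarsym : hbar.IsSymm) (hhbar0 : hbar ≠ 0) (htrbar : (gbar⁻¹ * hbar).trace = 0)
    (heq : quadPoly g * (quadPoly hbar) ^ 2 = quadPoly gbar * (quadPoly h) ^ 2) :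
    ∃ σ : ℝ, σ ≠ 0 ∧ gbar = (σ ^ 2) • g ∧ (hbar = σ • h ∨ hbar = (-σ) • h) := by
  have hm : 3 ≤ n - 1 := by omega
  have hprime : Prime (quadPoly g) :=
    (UniqueFactorizationMonoid.irreducible_iff_prime).mp (quadPoly_irreducible hm hgsym hgnd)
  have hg0 : g ≠ 0 := matrix_ne_zero_of_det_unit hm hgnd
  have hPg0 : quadPoly g ≠ 0 := quadPoly_ne_zero hgsym hg0
  have hPh0 : quadPoly h ≠ 0 := quadPoly_ne_zero hhsym hh0
  have hdvd : quadPoly g ∣ quadPoly gbar * (quadPoly h) ^ 2 := ⟨(quadPoly hbar) ^ 2, heq.symm⟩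
  have hnotdvdh : ¬ (quadPoly g ∣ quadPoly h) := by
    intro hd
    obtain ⟨r, hr0, hrk⟩ := scalar_of_dvd hm hgsym hgnd hhsym hh0 hd
    rw [hrk, Matrix.mul_smul, Matrix.trace_smul, Matrix.nonsing_inv_mul _ hgnd,
      Matrix.trace_one, smul_eq_mul] at htr
    have hcard : ((Fintype.card (Fin (n - 1)) : ℝ)) ≠ 0 := by
      rw [Fintype.card_fin]
      exact_mod_cast (by omega : n - 1 ≠ 0)
    exact hr0 ((mul_eq_zero.mp htr).resolve_right hcard)
  have hdvdbar : quadPoly g ∣ quadPoly gbar := by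
    rcases hprime.2.2 _ _ hdvd with h1 | h2
    · exact h1
    · exact absurd (hprime.dvd_of_dvd_pow h2) hnotdvdh
  obtain ⟨lam, hlam0, hlamk⟩ :=
    scalar_of_dvd hm hgsym hgnd hgbarsym (matrix_ne_zero_of_det_unit hm hgbarnd) hdvdbar
  -- cancel quadPoly g in the main equation
  have hcancel : (quadPoly hbar) ^ 2 = C lam * (quadPoly h) ^ 2 := by
    apply mul_left_cancel₀ hPg0
    rw [heq, hlamk, quadPoly_smul]
    ring
  -- find an evaluation point where quadPoly h is nonzero
  have hexx : ∃ x : Fin (n - 1) → ℝ, MvPolynomial.eval x (quadPoly h) ≠ 0 := by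
    by_contra hall
    push_neg at hall
    exact hPh0 (MvPolynomial.funext fun x => by rw [hall x, map_zero])
  obtain ⟨x, hx⟩ := hexx
  have hev : (MvPolynomial.eval x (quadPoly hbar)) ^ 2 =
      lam * (MvPolynomial.eval x (quadPoly h)) ^ 2 := by
    have := congrArg (MvPolynomial.eval x) hcancel
    rwa [map_pow, _root_.map_mul, map_pow, eval_C] at this
  have hlampos : 0 < lam := by
    rcases lt_trichotomy lam 0 with hneg | hz | hpos
    · nlinarith [sq_nonneg (MvPolynomial.eval x (quadPoly hbar)),
        sq_nonneg (MvPolynomial.eval x (quadPoly h)), sq_pos_of_ne_zero hx]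
    · exact absurd hz hlam0
    · exact hpos
  set s := Real.sqrt lam with hs
  have hs2 : s ^ 2 = lam := Real.sq_sqrt hlampos.le
  have hsne : s ≠ 0 := by
    rw [hs]
    exact (Real.sqrt_pos.mpr hlampos).ne'
  have hCs : (C s : MvPolynomial (Fin (n - 1)) ℝ) * C s = C lam := by
    rw [← _root_.map_mul]
    congr 1
    rw [← hs2]; ring
  have hfact : (quadPoly hbar - C s * quadPoly h) * (quadPoly hbar + C s * quadPoly h) = 0 := by
    have : (quadPoly hbar - C s * quadPoly h) * (quadPoly hbar + C s * quadPoly h) =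
        (quadPoly hbar) ^ 2 - (C s * C s) * (quadPoly h) ^ 2 := by ring
    rw [this, hCs, hcancel, sub_self]
  have hsh_symm : (s • h).IsSymm := by rw [Matrix.IsSymm, Matrix.transpose_smul, hhsym]
  have hnsh_symm : ((-s) • h).IsSymm := by rw [Matrix.IsSymm, Matrix.transpose_smul, hhsym]
  refine ⟨s, hsne, by rw [hs2]; exact hlamk, ?_⟩
  rcases mul_eq_zero.mp hfact with h1 | h2
  · left
    apply quadPoly_inj hhbarsym hsh_symm
    rw [quadPoly_smul]
    exact sub_eq_zero.mp h1
  · right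
    apply quadPoly_inj hhbarsym hnsh_symm
    rw [quadPoly_smul]
    have : quadPoly hbar = -(C s * quadPoly h) := by
      have := eq_neg_of_add_eq_zero_left h2
      exact this
    rw [this, map_neg]
    ring
end
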